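/- arXiv:2509.02951 — 2 statements merged into one kernel-verified Lean document; each statement's English description precedes it below -/
import Mathlib

section
/- Let k > 0 and α(ξ) = -√(i(ξ-k))·√(-i(ξ+k)) with the principal branch of the square root. Then as Re ξ → ±∞, α(ξ) = -√(ξ²) + k²/(2√(ξ²)) + O(ξ⁻³). -/
noncomputable def csqrt (z : ℂ) : ℂ := z ^ (1/2 : ℂ)

/-- α(ξ) = -√(i(ξ-k))·√(-i(ξ+k)) with principal square roots. -/
noncomputable def alphaFn (k : ℝ) (ξ : ℂ) : ℂ :=
  -(csqrt (Complex.I * (ξ - (k : ℂ))) * csqrt (-Complex.I * (ξ + (k : ℂ))))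

open Complex Filter Asymptotics

lemma csqrt_mul_self {z : ℂ} (hz : z ≠ 0) : csqrt z * csqrt z = z := by
  rw [csqrt, ← Complex.cpow_add _ _ hz]
  norm_num

lemma csqrt_im_half {z : ℂ} (hz : z ≠ 0) :
    (Complex.log z * (1/2 : ℂ)).im = Complex.arg z / 2 := by
  simp [Complex.mul_im, Complex.log_im]
  ring

lemma csqrt_re_nonneg (z : ℂ) : 0 ≤ (csqrt z).re := by
  by_cases hz : z = 0
  · simp [csqrt, hz, Complex.zero_cpow (by norm_num : (1/2:ℂ) ≠ 0)]
  · rw [csqrt, Complex.cpow_def_of_ne_zero hz, Complex.exp_re, csqrt_im_half hz]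
    apply mul_nonneg (Real.exp_nonneg _)
    apply Real.cos_nonneg_of_mem_Icc
    constructor
    · have := Complex.neg_pi_lt_arg z; linarith
    · have := Complex.arg_le_pi z; linarith

lemma csqrt_quadrant_pos {z : ℂ} (h : 0 < z.im) :
    0 < (csqrt z).re ∧ 0 < (csqrt z).im := by
  have hz : z ≠ 0 := fun hz => by simp [hz] at h
  have h1 : 0 < Complex.arg z := by
    rcases lt_or_eq_of_le (Complex.arg_nonneg_iff.2 h.le) with h' | h'
    · exact h'
    · exact absurd (Complex.arg_eq_zero_iff.1 h'.symm).2 (ne_of_gt h)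
  have h2 : Complex.arg z < Real.pi := Complex.arg_lt_pi_iff.2 (Or.inr (ne_of_gt h))
  have hpi := Real.pi_pos
  rw [csqrt, Complex.cpow_def_of_ne_zero hz, Complex.exp_re, Complex.exp_im,
    csqrt_im_half hz]
  constructor
  · exact mul_pos (Real.exp_pos _)
      (Real.cos_pos_of_mem_Ioo ⟨by linarith, by linarith⟩)
  · exact mul_pos (Real.exp_pos _)
      (Real.sin_pos_of_pos_of_lt_pi (by linarith) (by linarith))

lemma csqrt_quadrant_neg {z : ℂ} (h : z.im < 0) :
    0 < (csqrt z).re ∧ (csqrt z).im < 0 := by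
  have hz : z ≠ 0 := fun hz => by simp [hz] at h
  have h1 : Complex.arg z < 0 := Complex.arg_neg_iff.2 h
  have h2 : -Real.pi < Complex.arg z := Complex.neg_pi_lt_arg z
  have hpi := Real.pi_pos
  rw [csqrt, Complex.cpow_def_of_ne_zero hz, Complex.exp_re, Complex.exp_im,
    csqrt_im_half hz]
  constructor
  · exact mul_pos (Real.exp_pos _)
      (Real.cos_pos_of_mem_Ioo ⟨by linarith, by linarith⟩)
  · apply mul_neg_of_pos_of_neg (Real.exp_pos _)
    apply Real.sin_neg_of_neg_of_neg_pi_lt <;> linarith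

/-- As Re ξ → ±∞, α(ξ) = -√(ξ²) + k²/(2√(ξ²)) + O(ξ⁻³). -/
theorem stmt1 (k : ℝ) (hk : 0 < k) :
    Asymptotics.IsBigO (Filter.comap (fun ξ : ℂ => |ξ.re|) Filter.atTop)
      (fun ξ : ℂ => alphaFn k ξ - (-(csqrt (ξ^2)) + (k : ℂ)^2 / (2 * csqrt (ξ^2))))
      (fun ξ : ℂ => (ξ^3)⁻¹) := by
  rw [Asymptotics.isBigO_iff]
  refine ⟨k^4/2, ?_⟩
  rw [Filter.eventually_comap]
  filter_upwards [Filter.eventually_ge_atTop (k+1)] with r hr ξ hξr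
  have hx : k + 1 ≤ |ξ.re| := hξr ▸ hr
  set x := ξ.re with hxdef
  have hxk : k < |x| := by linarith
  have hx0 : x ≠ 0 := by intro h; rw [h] at hxk; simp at hxk; linarith
  have hξ0 : ξ ≠ 0 := fun h => hx0 (by simp [hxdef, h])
  -- nonvanishing of the arguments of the square roots
  have hak : (Complex.I * (ξ - (k:ℂ))).im = x - k := by
    simp [Complex.mul_im]; rfl
  have hbk : (-Complex.I * (ξ + (k:ℂ))).im = -(x + k) := by
    simp [Complex.mul_im]; rfl
  have ha0 : Complex.I * (ξ - (k:ℂ)) ≠ 0 := by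
    intro h
    have : x - k = 0 := by rw [← hak, h]; simp
    have : x = k := by linarith
    rw [this] at hxk; rw [abs_of_pos hk] at hxk; linarith
  have hb0 : -Complex.I * (ξ + (k:ℂ)) ≠ 0 := by
    intro h
    have : -(x + k) = 0 := by rw [← hbk, h]; simp
    have : x = -k := by linarith
    rw [this] at hxk; rw [abs_neg, abs_of_pos hk] at hxk; linarith
  set A := csqrt (Complex.I * (ξ - (k:ℂ))) with hA
  set B := csqrt (-Complex.I * (ξ + (k:ℂ))) with hB
  set P := A * B with hPdef
  set S := csqrt (ξ^2) with hS
  have hA2 := csqrt_mul_self ha0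
  have hB2 := csqrt_mul_self hb0
  have hP2 : P * P = ξ^2 - (k:ℂ)^2 := by
    have : P * P = (A * A) * (B * B) := by ring
    rw [this, hA2, hB2]
    have hI := Complex.I_mul_I
    linear_combination (-(ξ-(k:ℂ))*(ξ+(k:ℂ))) * hI
  have hS2 : S * S = ξ^2 := csqrt_mul_self (pow_ne_zero 2 hξ0)
  -- Re P > 0
  have hReP : 0 < P.re := by
    have hmul : P.re = A.re * B.re - A.im * B.im := Complex.mul_re A B
    rcases abs_cases x with ⟨hxe, _⟩ | ⟨hxe, _⟩
    · -- x > k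
      have hxp : k < x := by rw [← hxe]; exact hxk
      have hA' := csqrt_quadrant_pos (z := Complex.I * (ξ - (k:ℂ))) (by rw [hak]; linarith)
      have hB' := csqrt_quadrant_neg (z := -Complex.I * (ξ + (k:ℂ))) (by rw [hbk]; linarith)
      rw [hmul]; nlinarith [hA'.1, hA'.2, hB'.1, hB'.2]
    · -- x < -k
      have hxp : x < -k := by nlinarith
      have hA' := csqrt_quadrant_neg (z := Complex.I * (ξ - (k:ℂ))) (by rw [hak]; linarith)
      have hB' := csqrt_quadrant_pos (z := -Complex.I * (ξ + (k:ℂ))) (by rw [hbk]; linarith)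
      rw [hmul]; nlinarith [hA'.1, hA'.2, hB'.1, hB'.2]
  -- S = ξ or S = -ξ, and Re S = |x|
  have hSeq : S = ξ ∨ S = -ξ := by
    have : S * S = ξ * ξ := by rw [hS2]; ring
    exact mul_self_eq_mul_self_iff.1 this
  have hReS : S.re = |x| := by
    have h0 : 0 ≤ S.re := by rw [hS]; exact csqrt_re_nonneg _
    rcases hSeq with h | h
    · have hre : S.re = x := by rw [h]
      have h0x : 0 ≤ x := by rw [hre] at h0; exact h0
      rw [hre, _root_.abs_of_nonneg h0x]
    · have hre : S.re = -x := by rw [h]; simp; rfl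
      have h0x : x ≤ 0 := by rw [hre] at h0; linarith
      rw [hre, abs_of_nonpos h0x]
  have hnormS : ‖S‖ = ‖ξ‖ := by
    rcases hSeq with h | h <;> rw [h] <;> simp
  have hxabs : (0:ℝ) < |x| := abs_pos.2 hx0
  have hS0 : S ≠ 0 := by
    intro h
    have hre0 : S.re = 0 := by rw [h]; rfl
    rw [hReS] at hre0
    linarith
  have hxle : |x| ≤ ‖ξ‖ := Complex.abs_re_le_norm ξ
  -- norm of P + S
  have hRePS : |x| < (P + S).re := by
    simp only [Complex.add_re]; rw [hReS]; linarith
  have hPSn : |x| < ‖P + S‖ := lt_of_lt_of_le hRePS (Complex.re_le_norm _)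
  have hPS0 : P + S ≠ 0 := by
    intro h; rw [h] at hPSn; simp at hPSn; linarith
  -- (S - P)(S + P) = k²
  have hdiff : (S - P) * (S + P) = (k:ℂ)^2 := by
    linear_combination hS2 - hP2
  have hdiffnorm : ‖S - P‖ * ‖P + S‖ = k^2 := by
    have : ‖(S - P) * (S + P)‖ = ‖((k:ℂ))^2‖ := by rw [hdiff]
    rw [norm_mul, norm_pow, Complex.norm_real] at this
    rw [show P + S = S + P by ring]
    rw [this, Real.norm_eq_abs, abs_of_pos hk]
  -- key lower bound ‖P+S‖ ≥ ‖ξ‖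
  have hkey : ‖ξ‖ ≤ ‖P + S‖ := by
    by_contra hcon
    push_neg at hcon
    have h2S : 2 * ‖S‖ ≤ ‖P + S‖ + ‖S - P‖ := by
      have : (2:ℂ) * S = (P + S) + (S - P) := by ring
      calc 2 * ‖S‖ = ‖(2:ℂ) * S‖ := by rw [norm_mul]; simp
        _ = ‖(P + S) + (S - P)‖ := by rw [this]
        _ ≤ ‖P + S‖ + ‖S - P‖ := norm_add_le _ _
    rw [hnormS] at h2S
    have ht0 : 0 < ‖P + S‖ := by linarith
    have hxn : k + 1 ≤ ‖ξ‖ := le_trans hx hxle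
    -- from 2‖ξ‖ ≤ t + u, t < ‖ξ‖ : ‖ξ‖ < u, so t‖ξ‖ < tu = k², but t > k+1, ‖ξ‖ ≥ k+1
    nlinarith [hdiffnorm, hPSn, hx]
  -- algebraic identity
  have hP2' : (A*B) * (A*B) = ξ^2 - (k:ℂ)^2 := hP2
  have hexpr : alphaFn k ξ - (-(csqrt (ξ^2)) + (k : ℂ)^2 / (2 * csqrt (ξ^2)))
      = (k:ℂ)^4 / (2 * S * (P + S)^2) := by
    show -(A * B) - (-(S) + (k : ℂ)^2 / (2 * S)) = (k:ℂ)^4 / (2 * S * (P + S)^2)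
    have hPS0' : P + S ≠ 0 := hPS0
    have hdc : (k:ℂ)^2 / (2*S) * (2*S) = (k:ℂ)^2 := div_mul_cancel₀ _ (mul_ne_zero two_ne_zero hS0)
    have key : (-P - (-S + (k:ℂ)^2 / (2*S))) * (2*S*(P+S)^2) = (k:ℂ)^4 := by
      linear_combination (-(P+S)^2) * hdc + (2*S*(P+S)+(k:ℂ)^2) * (hS2 - hP2)
    rw [eq_div_iff (mul_ne_zero (mul_ne_zero two_ne_zero hS0) (pow_ne_zero 2 hPS0'))]
    exact key
  rw [hexpr]
  have hξn : 0 < ‖ξ‖ := by rw [norm_pos_iff]; exact hξ0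
  have hnorm : ‖(k:ℂ)^4 / (2 * S * (P + S)^2)‖ = k^4 / (2 * ‖ξ‖ * ‖P + S‖^2) := by
    rw [norm_div, norm_mul, norm_mul, norm_pow, norm_pow, Complex.norm_real,
      Real.norm_eq_abs, abs_of_pos hk, hnormS]
    norm_num
  have hrhs : ‖(ξ^3)⁻¹‖ = (‖ξ‖^3)⁻¹ := by rw [norm_inv, norm_pow]
  rw [hnorm, hrhs]
  have heq : k^4/2 * (‖ξ‖^3)⁻¹ = k^4 / (2 * ‖ξ‖ * ‖ξ‖^2) := by
    field_simp
  rw [heq]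
  have hsq : ‖ξ‖^2 ≤ ‖P + S‖^2 := pow_le_pow_left₀ (norm_nonneg ξ) hkey 2
  apply div_le_div_of_nonneg_left (by positivity) (by positivity)
  have : (0:ℝ) ≤ 2 * ‖ξ‖ := by positivity
  nlinarith
end

section
/- Let k > 0 and θ ∈ (0, π) with cos θ ≥ 0. Along the steepest descent contour ξ(t;θ) = k(1+it²)cos θ + kt√(t²-2i) sin θ (principal square root), one has Im(t√(t²-2i)) > -1 for all real t, and consequently Im ξ(t;θ) > -k sin θ for all real t. -/
open Complex

lemma csqrt_sq (z : ℂ) : csqrt z ^ 2 = z := by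
  simp [csqrt]

lemma abs_im_ofReal_mul_lt_one_of_sq_eq {t : ℝ} {w : ℂ} (hw : w ^ 2 = (t : ℂ) ^ 2 - 2 * I) :
    |((t : ℂ) * w).im| < 1 := by
  have hre : w.re ^ 2 - w.im ^ 2 = t ^ 2 := by
    simpa [sq, ← ofReal_pow] using congrArg re hw
  have him : w.re * w.im = -1 := by
    have := congrArg im hw
    simp only [sq, mul_im, sub_im, ofReal_im, re_ofNat, im_ofNat, I_re, I_im] at this
    linarith
  have hw_im : w.im ≠ 0 := fun h => by simp [h] at him
  have hsq : (t * w.im) ^ 2 = 1 - w.im ^ 4 := by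
    linear_combination (-w.im ^ 2) * hre + (w.re * w.im - 1) * him
  rw [im_ofReal_mul, ← sq_lt_one_iff_abs_lt_one, hsq]
  have : 0 < w.im ^ 4 := by positivity
  linarith

lemma im_contour (k θ t : ℝ) (w : ℂ) :
    ((k : ℂ) * (1 + I * (t : ℂ) ^ 2) * (Real.cos θ : ℂ) + (k : ℂ) * (t : ℂ) * w * (Real.sin θ : ℂ)).im
      = k * t ^ 2 * Real.cos θ + k * Real.sin θ * ((t : ℂ) * w).im := by
  simp only [add_im, mul_im, mul_re, ofReal_re, ofReal_im, ← ofReal_pow, add_re, one_re, one_im,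
    I_re, I_im]
  ring

/-- Along the steepest descent contour ξ(t;θ) = k(1+it²)cos θ + kt√(t²-2i) sin θ,
one has Im(t√(t²-2i)) > -1, and consequently Im ξ(t;θ) > -k sin θ. -/
theorem stmt9 (k θ : ℝ) (hk : 0 < k) (hθ : θ ∈ Set.Ioo 0 Real.pi)
    (hcos : 0 ≤ Real.cos θ) :
    (∀ t : ℝ, -1 < ((t : ℂ) * csqrt ((t : ℂ)^2 - 2 * Complex.I)).im) ∧
    (∀ t : ℝ, -(k * Real.sin θ) <
      ((k : ℂ) * (1 + Complex.I * (t : ℂ)^2) * (Real.cos θ : ℂ)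
        + (k : ℂ) * (t : ℂ) * csqrt ((t : ℂ)^2 - 2 * Complex.I) * (Real.sin θ : ℂ)).im) := by
  have hbound (t : ℝ) : -1 < ((t : ℂ) * csqrt ((t : ℂ) ^ 2 - 2 * I)).im :=
    (abs_lt.mp (abs_im_ofReal_mul_lt_one_of_sq_eq (csqrt_sq _))).1
  refine ⟨hbound, fun t => ?_⟩
  rw [im_contour]
  have hks : 0 < k * Real.sin θ := mul_pos hk (Real.sin_pos_of_pos_of_lt_pi hθ.1 hθ.2)
  have hcos_term : 0 ≤ k * t ^ 2 * Real.cos θ := by positivity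
  linarith [mul_lt_mul_of_pos_left (hbound t) hks]
end
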